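/- arXiv:2111.07660 — 4 statements merged into one kernel-verified Lean document; each statement's English description precedes it below -/
import Mathlib

section
/- Let ν, c > 0. For complex s with Re s > -c²/ν, write s = |s|e^{iθ} with θ ∈ [-2π/3, 2π/3] for |s| large, and set λ = s/√(νs + c²) (branch with √(νs+c²) > 0 for real s > -c²/ν). Then as |s| → ∞ with Re s > -c²/ν, Re λ ≥ √|s|/(2√ν) + O(1/√|s|); in particular there exist R, K > 0 such that Re λ ≥ √|s|/(2√ν) - K/√|s| for all such s with |s| ≥ R. -/
/-!
With `u = √(νs + c²)` one has `s / u = (u - c² / u) / ν`, so `Re (s / u) = Re u · (1 - c² / |u|²) / ν`.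
Since `Re (νs + c²) ≥ 0`, the principal root satisfies `Re u ≥ √(|u|² / 2)`, and
`|u|² ≥ ν|s| - c² ≥ ν|s| / 2` once `|s| ≥ 2c² / ν`. Hence `Re u ≥ √(ν|s|) / 2`, and the factor
`1 - c² / |u|² ≥ 1 - 2c² / (ν|s|)` costs only `c² / (ν^{3/2} √|s|)`.
-/

open Complex

lemma Complex.sqrt_half_norm_le_re_cpow_inv_two {w : ℂ} (hw : 0 ≤ w.re) :
    √(‖w‖ / 2) ≤ (w ^ (2⁻¹ : ℂ)).re := by
  rw [cpow_inv_two_re]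
  gcongr
  linarith

lemma Complex.re_div_eq_of_sq_eq {s u : ℂ} {ν a : ℝ} (h : u ^ 2 = ν * s + a) (hν : ν ≠ 0) :
    (s / u).re = u.re * (1 - a / ‖u‖ ^ 2) / ν := by
  rcases eq_or_ne u 0 with rfl | hu
  · simp
  have hν' : (ν : ℂ) ≠ 0 := ofReal_ne_zero.mpr hν
  have hs : s = (u ^ 2 - a) / ν := by
    rw [h]
    field_simp
    ring
  have hsu : s / u = ((1 / ν : ℝ) : ℂ) * u - ((a / ν : ℝ) : ℂ) * u⁻¹ := by
    rw [hs]
    push_cast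
    field_simp
  rw [hsu, sub_re, re_ofReal_mul, re_ofReal_mul, inv_re, normSq_eq_norm_sq]
  ring

lemma sqrt_div_sub_le_mul_one_sub_div {ν c A W r : ℝ} (hν : 0 < ν) (hA : 0 < A)
    (hAc : 2 * c ^ 2 ≤ ν * A) (hW : ν * A - c ^ 2 ≤ W) (hr : √(W / 2) ≤ r) :
    √A / (2 * √ν) - c ^ 2 / (ν * √ν) / √A ≤ r * (1 - c ^ 2 / W) / ν := by
  have hW_half : ν * A / 2 ≤ W := by linarith
  have hW_pos : 0 < W := by linarith [mul_pos hν hA]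
  have hr_lower : √ν * √A / 2 ≤ r := calc
    √ν * √A / 2 = √(ν * A / 4) := by
      rw [Real.sqrt_div' _ (by norm_num), show (4 : ℝ) = 2 ^ 2 by norm_num,
        Real.sqrt_sq (by norm_num), Real.sqrt_mul hν.le]
    _ ≤ √(W / 2) := Real.sqrt_le_sqrt (by linarith)
    _ ≤ r := hr
  have hfactor : 1 - 2 * c ^ 2 / (ν * A) ≤ 1 - c ^ 2 / W := by
    gcongr 1 - ?_
    rw [div_le_div_iff₀ hW_pos (by positivity)]
    nlinarith
  have hfactor_nonneg : 0 ≤ 1 - 2 * c ^ 2 / (ν * A) := by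
    rw [sub_nonneg, div_le_one (by positivity)]
    exact hAc
  calc √A / (2 * √ν) - c ^ 2 / (ν * √ν) / √A
      = √ν * √A / 2 * (1 - 2 * c ^ 2 / (ν * A)) / ν := by
        have identity : ∀ x y : ℝ, 0 < x → 0 < y → x / (2 * y) - c ^ 2 / (y ^ 2 * y) / x =
            y * x / 2 * (1 - 2 * c ^ 2 / (y ^ 2 * x ^ 2)) / y ^ 2 := by
          intro x y hx hy
          field_simp
        have := identity (√A) (√ν) (Real.sqrt_pos.mpr hA) (Real.sqrt_pos.mpr hν)
        rwa [Real.sq_sqrt hν.le, Real.sq_sqrt hA.le] at this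
    _ ≤ r * (1 - c ^ 2 / W) / ν := by
      gcongr
      linarith [show 0 ≤ √ν * √A / 2 by positivity]

theorem stmt6 (ν c : ℝ) (hν : 0 < ν) (hc : 0 < c) :
    ∃ R K : ℝ, 0 < R ∧ 0 < K ∧
      ∀ s : ℂ, s.re > -c^2/ν → R ≤ ‖s‖ →
        (s / ((ν * s + (c:ℂ)^2) ^ ((1:ℂ)/2))).re ≥
          Real.sqrt (‖s‖) / (2 * Real.sqrt ν)
            - K / Real.sqrt (‖s‖) := by
  refine ⟨2 * c ^ 2 / ν, c ^ 2 / (ν * √ν), by positivity, by positivity, fun s hs hR => ?_⟩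
  set w : ℂ := ν * s + (c : ℂ) ^ 2
  have hw_re : 0 ≤ w.re := by
    have : -c ^ 2 < ν * s.re := by rwa [gt_iff_lt, div_lt_iff₀' hν] at hs
    simp only [w, add_re, re_ofReal_mul, ← ofReal_pow, ofReal_re]
    linarith
  have hw_norm : ν * ‖s‖ - c ^ 2 ≤ ‖w‖ := by
    have := norm_sub_norm_le ((ν : ℂ) * s) (-(c : ℂ) ^ 2)
    rw [sub_neg_eq_add, norm_neg, norm_mul, norm_pow, norm_real, norm_real,
      Real.norm_of_nonneg hν.le, Real.norm_of_nonneg hc.le] at this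
    linarith
  have hu_sq : (w ^ ((1 : ℂ) / 2)) ^ 2 = ν * s + ((c ^ 2 : ℝ) : ℂ) := by
    rw [one_div, cpow_ofNat_inv_pow]
    push_cast
    rfl
  have hs_pos : 0 < ‖s‖ := lt_of_lt_of_le (by positivity) hR
  rw [ge_iff_le, re_div_eq_of_sq_eq hu_sq hν.ne', ← norm_pow, hu_sq, ofReal_pow]
  exact sqrt_div_sub_le_mul_one_sub_div hν hs_pos ((div_le_iff₀' hν).mp hR) hw_norm
    (one_div (2 : ℂ) ▸ sqrt_half_norm_le_re_cpow_inv_two hw_re)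
end

section
/- Let ν, c > 0 and define λ(s) = s/√(νs+c²) and r(s) = λ²/(λ+2)² for s ∈ ℂ \ (-∞, -c²/ν]. Then there exist σ₀ > 0 and r₀ ∈ (0,1) such that for all s with Re s ≥ -σ₀ (and s ∉ (-∞, -c²/ν]), one has Re λ(s) ≥ -r₀ and |r(s) e^{-2λ(s)}| ≤ r₀. -/
/-!
Put `w = √(νs + c²)`, so that `Re w ≥ 0`, `λ = (w² - c²) / (ν w)` and
`ν (Re λ) |w|² = Re w (|w|² - c²)`. With `T = |λ|²` and `x = Re λ`,
`|r e^{-2λ}| = T e^{-2x} / (T + 4x + 4)`.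
If `|w|² ≤ 2c²`, then `T ≤ 5c²/ν²` is bounded while `x ≥ -2σ₀/c` is only slightly negative,
which keeps the quotient below `M / (M + 2)` for `M = 5c²/ν²`.
If `|w|² > 2c²`, then `x ≥ 0` and `T ≤ 18 x²`, and the quotient is at most `9/11`:
either `x ≤ 1`, so `T ≤ 18`, or `e^{-2x} ≤ 1/3`.
-/

open Complex

lemma mul_exp_div_le_of_le_sq {T x : ℝ} (hT : 0 ≤ T) (hx : 0 ≤ x) (hTx : T ≤ 18 * x ^ 2) :
    T * Real.exp (-(2 * x)) / (T + 4 * x + 4) ≤ 9 / 11 := by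
  have hD : 0 < T + 4 * x + 4 := by linarith
  rw [mul_div_right_comm]
  rcases le_or_gt x 1 with hx1 | hx1
  · have hexp : Real.exp (-(2 * x)) ≤ 1 := Real.exp_le_one_iff.mpr (by linarith)
    have hratio : T / (T + 4 * x + 4) ≤ 9 / 11 := by
      rw [div_le_div_iff₀ hD (by norm_num)]
      nlinarith
    calc T / (T + 4 * x + 4) * Real.exp (-(2 * x)) ≤ 9 / 11 * 1 := by gcongr
      _ = 9 / 11 := by norm_num
  · have hexp : Real.exp (-(2 * x)) ≤ 1 / 3 := by
      rw [Real.exp_neg, ← one_div]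
      gcongr
      linarith [Real.add_one_le_exp (2 * x)]
    have hratio : T / (T + 4 * x + 4) ≤ 1 := (div_le_one hD).mpr (by linarith)
    calc T / (T + 4 * x + 4) * Real.exp (-(2 * x)) ≤ 1 * (1 / 3) := by gcongr
      _ ≤ 9 / 11 := by norm_num

lemma mul_exp_div_le_of_le {T x M δ : ℝ} (hT : 0 ≤ T) (hTM : T ≤ M) (hδ : 0 ≤ δ)
    (hδM : δ * (6 + M) ≤ 1) (hx : -δ ≤ x) :
    T * Real.exp (-(2 * x)) / (T + 4 * x + 4) ≤ M / (M + 2) := by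
  have hM : 0 ≤ M := hT.trans hTM
  have h2δ : 0 < 1 - 2 * δ := by nlinarith
  have hexp : Real.exp (-(2 * x)) ≤ 1 / (1 - 2 * δ) :=
    (Real.exp_le_exp.mpr (by linarith)).trans
      (Real.exp_bound_div_one_sub_of_interval (by linarith) (by linarith))
  have hratio : T / (T + 4 - 4 * δ) ≤ M / (M + 4 - 4 * δ) := by
    rw [div_le_div_iff₀ (by linarith) (by linarith)]
    nlinarith
  calc T * Real.exp (-(2 * x)) / (T + 4 * x + 4)
      ≤ T * (1 / (1 - 2 * δ)) / (T + 4 - 4 * δ) :=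
        div_le_div₀ (by positivity) (mul_le_mul_of_nonneg_left hexp hT) (by linarith)
          (by linarith)
    _ = T / (T + 4 - 4 * δ) / (1 - 2 * δ) := by ring
    _ ≤ M / (M + 4 - 4 * δ) / (1 - 2 * δ) := by gcongr
    _ ≤ M / (M + 2) := by
        rw [div_div, div_le_div_iff₀ (by nlinarith) (by linarith)]
        nlinarith [mul_nonneg hM (by linarith : 0 ≤ 1 - δ * (6 + M)), mul_nonneg hM (sq_nonneg δ)]

lemma norm_sq_div_sq_mul_exp (L : ℂ) :
    ‖L ^ 2 / (L + 2) ^ 2 * exp (-2 * L)‖ =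
      normSq L * Real.exp (-(2 * L.re)) / (normSq L + 4 * L.re + 4) := by
  have hre : (-2 * L).re = -(2 * L.re) := by simp
  have hden : normSq (L + 2) = normSq L + 4 * L.re + 4 := by
    simp only [normSq_apply, add_re, add_im, re_ofNat, im_ofNat]; ring
  rw [norm_mul, norm_div, norm_pow, norm_pow, norm_exp, hre, ← normSq_eq_norm_sq,
    ← normSq_eq_norm_sq, hden, div_mul_eq_mul_div]

lemma re_sq_sub_div_mul_normSq (w : ℂ) (k : ℝ) :
    ((w ^ 2 - k) / w).re * normSq w = w.re * (normSq w - k) := by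
  rcases eq_or_ne w 0 with rfl | hw
  · simp
  have : (w ^ 2 - k) / w = w - k * w⁻¹ := by field_simp
  rw [this, sub_re, re_ofReal_mul, inv_re]
  field_simp [normSq_pos.mpr hw |>.ne']

lemma normSq_sq_sub_div_mul_normSq_le (w : ℂ) {k : ℝ} (hk : 0 ≤ k) :
    normSq ((w ^ 2 - k) / w) * normSq w ≤ (normSq w + k) ^ 2 := by
  rcases eq_or_ne w 0 with rfl | hw
  · simpa using sq_nonneg k
  rw [map_div₀, div_mul_cancel₀ _ (normSq_pos.mpr hw).ne', normSq_eq_norm_sq, normSq_eq_norm_sq]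
  have := norm_sub_le (w ^ 2) (k : ℂ)
  rw [norm_pow, norm_real, Real.norm_of_nonneg hk] at this
  gcongr

section

variable {ν c : ℝ} {w : ℂ}

lemma neg_div_le_re_sq_sub_div {σ : ℝ} (hν : 0 < ν) (hc : 0 < c) (hσ : 0 ≤ σ)
    (hw : 0 ≤ w.re) (hw2 : c ^ 2 / 2 ≤ (w ^ 2).re) (hw2σ : c ^ 2 - ν * σ ≤ (w ^ 2).re) :
    -(2 * σ / c) ≤ ((w ^ 2 - (c ^ 2 : ℝ)) / w / ν).re := by
  have hre := re_sq_sub_div_mul_normSq w (c ^ 2)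
  set x := ((w ^ 2 - (c ^ 2 : ℝ)) / w).re
  set N := normSq w
  have hN : N = w.re ^ 2 + w.im ^ 2 := by simp only [N, normSq_apply]; ring
  have hsq : (w ^ 2).re = w.re ^ 2 - w.im ^ 2 := by simp [sq]
  rw [hsq] at hw2 hw2σ
  have ha : c / 2 ≤ w.re := by nlinarith
  have h1 : 0 ≤ w.re * c * (N - c ^ 2 + ν * σ) := by
    have : 0 ≤ N - c ^ 2 + ν * σ := by nlinarith
    positivity
  have h2 : 0 ≤ ν * σ * (2 * N - w.re * c) := by
    have : 0 ≤ 2 * N - w.re * c := by nlinarith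
    positivity
  have key : N * (c * x + 2 * σ * ν) =
      w.re * c * (N - c ^ 2 + ν * σ) + ν * σ * (2 * N - w.re * c) := by
    linear_combination c * hre
  have hcx : 0 ≤ c * x + 2 * σ * ν :=
    (mul_nonneg_iff_of_pos_left (by nlinarith)).mp (key ▸ add_nonneg h1 h2)
  rw [div_ofReal_re, le_div_iff₀ hν, neg_mul, div_mul_eq_mul_div, neg_le, le_div_iff₀ hc]
  linarith

lemma normSq_sq_sub_div_le_or (hν : 0 < ν) (hc : 0 < c)
    (hw : 0 ≤ w.re) (hw2 : c ^ 2 / 2 ≤ (w ^ 2).re) :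
    normSq ((w ^ 2 - (c ^ 2 : ℝ)) / w / ν) ≤ 5 * c ^ 2 / ν ^ 2 ∨
      (0 ≤ ((w ^ 2 - (c ^ 2 : ℝ)) / w / ν).re ∧
        normSq ((w ^ 2 - (c ^ 2 : ℝ)) / w / ν) ≤ 18 * ((w ^ 2 - (c ^ 2 : ℝ)) / w / ν).re ^ 2) := by
  have hre := re_sq_sub_div_mul_normSq w (c ^ 2)
  have hnorm := normSq_sq_sub_div_mul_normSq_le w (sq_nonneg c)
  set μ := (w ^ 2 - (c ^ 2 : ℝ)) / w
  set N := normSq w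
  have hN : N = w.re ^ 2 + w.im ^ 2 := by simp only [N, normSq_apply]; ring
  have hsq : (w ^ 2).re = w.re ^ 2 - w.im ^ 2 := by simp [sq]
  rw [hsq] at hw2
  have hNc : c ^ 2 / 2 ≤ N := by nlinarith
  have hNpos : 0 < N := lt_of_lt_of_le (by positivity) hNc
  rw [normSq_div, normSq_ofReal, div_ofReal_re]
  rcases le_or_gt N (2 * c ^ 2) with hsmall | hlarge
  · left
    have : normSq μ * N ≤ 5 * c ^ 2 * N := by nlinarith
    rw [div_le_div_iff₀ (by positivity) (by positivity)]
    have := le_of_mul_le_mul_right this hNpos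
    nlinarith
  · right
    have hμre : w.re / 2 ≤ μ.re := by nlinarith
    have hμ : normSq μ ≤ 9 / 2 * w.re ^ 2 := by nlinarith
    refine ⟨div_nonneg (by linarith) hν.le, ?_⟩
    rw [div_pow, ← sq, mul_div_assoc']
    gcongr
    nlinarith

end

lemma exists_sq_eq_of_div_cpow_half {ν : ℝ} (hν : ν ≠ 0) (c : ℝ) (s : ℂ) :
    ∃ w : ℂ, 0 ≤ w.re ∧ (w ^ 2).re = ν * s.re + c ^ 2 ∧
      s / (ν * s + (c : ℂ) ^ 2) ^ ((1 : ℂ) / 2) = (w ^ 2 - (c ^ 2 : ℝ)) / w / ν := by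
  refine ⟨(ν * s + (c : ℂ) ^ 2) ^ ((2 : ℂ)⁻¹), ?_, ?_, ?_⟩
  · rw [cpow_inv_two_re]; positivity
  · rw [cpow_ofNat_inv_pow]; simp [← ofReal_pow]
  · have : (ν : ℂ) ≠ 0 := ofReal_ne_zero.mpr hν
    rw [cpow_ofNat_inv_pow, one_div]
    push_cast
    field_simp
    ring

theorem stmt7 (ν c : ℝ) (hν : 0 < ν) (hc : 0 < c) :
    ∃ σ₀ r₀ : ℝ, 0 < σ₀ ∧ r₀ ∈ Set.Ioo (0:ℝ) 1 ∧
      ∀ s : ℂ, s.re ≥ -σ₀ → ¬(s.im = 0 ∧ s.re ≤ -c^2/ν) →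
        (s / ((ν * s + (c:ℂ)^2) ^ ((1:ℂ)/2))).re ≥ -r₀ ∧
        ‖(s / ((ν * s + (c:ℂ)^2) ^ ((1:ℂ)/2)))^2 /
            (s / ((ν * s + (c:ℂ)^2) ^ ((1:ℂ)/2)) + 2)^2 *
            Complex.exp (-2 * (s / ((ν * s + (c:ℂ)^2) ^ ((1:ℂ)/2))))‖ ≤ r₀ := by
  set M := 5 * c ^ 2 / ν ^ 2
  set σ₀ := min (c ^ 2 / (2 * ν)) (c / (2 * (6 + M)))
  have hσ₀ : 0 < σ₀ := by positivity
  have hσν : ν * σ₀ ≤ c ^ 2 / 2 := by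
    have := min_le_left (c ^ 2 / (2 * ν)) (c / (2 * (6 + M)))
    rw [le_div_iff₀ (by positivity)] at this
    linarith
  have hδ : 2 * σ₀ / c * (6 + M) ≤ 1 := by
    have := min_le_right (c ^ 2 / (2 * ν)) (c / (2 * (6 + M)))
    rw [le_div_iff₀ (by positivity)] at this
    rw [div_mul_eq_mul_div, div_le_one hc]
    linarith
  refine ⟨σ₀, max (9 / 11) (M / (M + 2)), hσ₀,
    ⟨by positivity, max_lt (by norm_num) ((div_lt_one (by positivity)).mpr (by linarith))⟩,
    fun s hs _ => ?_⟩
  obtain ⟨w, hw, hw2, hL⟩ := exists_sq_eq_of_div_cpow_half hν.ne' c s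
  have hw2σ : c ^ 2 - ν * σ₀ ≤ (w ^ 2).re := by rw [hw2]; nlinarith
  have hw2c : c ^ 2 / 2 ≤ (w ^ 2).re := by linarith
  have hx := neg_div_le_re_sq_sub_div hν hc hσ₀.le hw hw2c hw2σ
  rw [hL, norm_sq_div_sq_mul_exp]
  refine ⟨?_, ?_⟩
  · have : 2 * σ₀ / c ≤ 1 / 6 := by nlinarith [show 0 ≤ M by positivity]
    have : (9 : ℝ) / 11 ≤ max (9 / 11) (M / (M + 2)) := le_max_left _ _
    linarith
  · rcases normSq_sq_sub_div_le_or hν hc hw hw2c with hsmall | ⟨hx₀, hlarge⟩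
    · exact (mul_exp_div_le_of_le (normSq_nonneg _) hsmall (by positivity) hδ hx).trans
        (le_max_right _ _)
    · exact (mul_exp_div_le_of_le_sq (normSq_nonneg _) hx₀ hlarge).trans (le_max_left _ _)
end

section
/- Let ω : [0,∞) → ℝ satisfy |ω(t)| ≤ Ce^{-αt} for constants C, α > 0, and suppose G : ℝ × (0,∞) → ℝ satisfies |G(x,s)| ≤ C₁ s^{-1/2} e^{-(x-cs)²/(C₁ s)} for x > 0, s > 0, with c, C₁ > 0. Then there exists C₂ > 0 such that for all x > 0 and t > 0, ∫_0^{t/2} |ω(t-s) G(x,s)| ds ≤ C₂ e^{-t/C₂} e^{-(x-ct)²/(C₂ t)} + C₂ e^{-(|x|+t)/C₂}. -/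
open MeasureTheory intervalIntegral

set_option maxHeartbeats 1000000 in
theorem stmt12 (ω : ℝ → ℝ) (G : ℝ → ℝ → ℝ) (C α c C₁ : ℝ)
    (hC : 0 < C) (hα : 0 < α) (hc : 0 < c) (hC₁ : 0 < C₁)
    (hω : ∀ t : ℝ, 0 ≤ t → |ω t| ≤ C * Real.exp (-α * t))
    (hG : ∀ x s : ℝ, 0 < x → 0 < s →
      |G x s| ≤ C₁ * s^(-(1:ℝ)/2) * Real.exp (-(x - c*s)^2 / (C₁ * s))) :
    ∃ C₂ : ℝ, 0 < C₂ ∧ ∀ x t : ℝ, 0 < x → 0 < t →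
      (∫ s in (0:ℝ)..(t/2), |ω (t - s) * G x s|) ≤
        C₂ * Real.exp (-t/C₂) * Real.exp (-(x - c*t)^2 / (C₂ * t))
          + C₂ * Real.exp (-(|x| + t)/C₂) := by
  set K₁ : ℝ := max 1 (4/α) with hK₁def
  have hK₁1 : (1:ℝ) ≤ K₁ := le_max_left _ _
  have hK₁α : 4/α ≤ K₁ := le_max_right _ _
  have hK₁pos : 0 < K₁ := lt_of_lt_of_le one_pos hK₁1
  set C₂ : ℝ := 2*C*C₁*K₁ + 4*(c+1)/α + 2*C₁/c + 1 with hC₂def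
  have hC₂pos : 0 < C₂ := by positivity
  refine ⟨C₂, hC₂pos, ?_⟩
  intro x t hx ht
  have habs : |x| = x := abs_of_pos hx
  rw [habs]
  have hrhs1 : 0 ≤ C₂ * Real.exp (-t/C₂) * Real.exp (-(x - c*t)^2 / (C₂ * t)) := by positivity
  by_cases hInt : IntervalIntegrable (fun s => |ω (t - s) * G x s|) volume 0 (t/2)
  · set E : ℝ := if x ≤ c*t then (1:ℝ) else Real.exp (-(c*x)/(2*C₁)) with hEdef
    have hEpos : 0 < E := by
      rw [hEdef]; split
      · norm_num
      · exact Real.exp_pos _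
    set B : ℝ := C * C₁ * E * Real.exp (-(α*t)/2) with hBdef
    have hBpos : 0 < B := by positivity
    have hIoc : (0:ℝ) ≤ t/2 := by linarith
    -- pointwise bound
    have hpt : ∀ s ∈ Set.Ioc (0:ℝ) (t/2), |ω (t - s) * G x s| ≤ B * s^(-(1:ℝ)/2) := by
      intro s hs
      obtain ⟨hs0, hs2⟩ := hs
      have hts : 0 ≤ t - s := by linarith
      have h1 : |ω (t - s)| ≤ C * Real.exp (-(α*t)/2) := by
        refine (hω (t-s) hts).trans ?_
        refine mul_le_mul_of_nonneg_left ?_ hC.le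
        apply Real.exp_le_exp.mpr
        nlinarith
      have hexp : Real.exp (-(x - c*s)^2 / (C₁ * s)) ≤ E := by
        rw [hEdef]; split
        · rename_i hxc
          rw [Real.exp_le_one_iff]
          apply div_nonpos_of_nonpos_of_nonneg
          · simp [sq_nonneg]
          · positivity
        · rename_i hxc
          push_neg at hxc
          apply Real.exp_le_exp.mpr
          rw [div_le_div_iff₀ (by positivity) (by positivity)]
          have hf1 : (0:ℝ) ≤ 2*x - c*s := by nlinarith
          have hf2 : (0:ℝ) ≤ x - 2*(c*s) := by nlinarith
          nlinarith [mul_nonneg hf1 hf2, mul_nonneg (mul_nonneg hf1 hf2) hC₁.le]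
      have h2 : |G x s| ≤ C₁ * s^(-(1:ℝ)/2) * E :=
        (hG x s hx hs0).trans (mul_le_mul_of_nonneg_left hexp (by positivity))
      calc |ω (t - s) * G x s| = |ω (t-s)| * |G x s| := abs_mul _ _
        _ ≤ (C * Real.exp (-(α*t)/2)) * (C₁ * s^(-(1:ℝ)/2) * E) :=
            mul_le_mul h1 h2 (abs_nonneg _) (by positivity)
        _ = B * s^(-(1:ℝ)/2) := by rw [hBdef]; ring
    have hg : IntervalIntegrable (fun s : ℝ => B * s^(-(1:ℝ)/2)) volume 0 (t/2) :=
      (intervalIntegral.intervalIntegrable_rpow' (by norm_num)).const_mul B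
    have hmono : (∫ s in (0:ℝ)..(t/2), |ω (t - s) * G x s|)
        ≤ ∫ s in (0:ℝ)..(t/2), B * s^(-(1:ℝ)/2) := by
      rw [intervalIntegral.integral_of_le hIoc, intervalIntegral.integral_of_le hIoc]
      exact setIntegral_mono_on hInt.1 hg.1 measurableSet_Ioc hpt
    have hval : (∫ s in (0:ℝ)..(t/2), B * s^(-(1:ℝ)/2)) = B * (2 * Real.sqrt (t/2)) := by
      have h0 : (0:ℝ) ^ (-(1:ℝ)/2 + 1) = 0 := Real.zero_rpow (by norm_num)
      rw [intervalIntegral.integral_const_mul,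
        show (∫ s in (0:ℝ)..(t/2), s^(-(1:ℝ)/2)) = ((t/2) ^ (-(1:ℝ)/2 + 1) - 0 ^ (-(1:ℝ)/2 + 1)) / (-(1:ℝ)/2 + 1) from integral_rpow (Or.inl (by norm_num))]
      congr 1
      rw [h0, Real.sqrt_eq_rpow]
      norm_num
      ring
    have hsqrt : Real.sqrt (t/2) ≤ 1 + t := by
      nlinarith [Real.sq_sqrt hIoc, Real.sqrt_nonneg (t/2),
        sq_nonneg (Real.sqrt (t/2) - 1)]
    have hkey1 : (1+t) * Real.exp (-(α*t)/4) ≤ K₁ := by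
      have h1 : α*t/4 + 1 ≤ Real.exp (α*t/4) := Real.add_one_le_exp _
      have h2 : (0:ℝ) < α*t/4 + 1 := by positivity
      have h3 : Real.exp (-(α*t)/4) ≤ (α*t/4+1)⁻¹ := by
        rw [neg_div, Real.exp_neg]
        exact inv_anti₀ h2 h1
      have h4 : (1+t) * Real.exp (-(α*t)/4) ≤ (1+t) * (α*t/4+1)⁻¹ :=
        mul_le_mul_of_nonneg_left h3 (by linarith)
      refine h4.trans ?_
      rw [← div_eq_mul_inv, div_le_iff₀ h2]
      have hKα : 4 ≤ K₁ * α := by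
        rw [div_le_iff₀ hα] at hK₁α; linarith
      nlinarith
    have hkey1' : Real.sqrt (t/2) * Real.exp (-(α*t)/4) ≤ K₁ :=
      le_trans (mul_le_mul_of_nonneg_right hsqrt (Real.exp_pos _).le) hkey1
    -- constants
    have hcc₂ : 0 ≤ 2*C*C₁*K₁ := by positivity
    have hC₂1 : 4*(c+1)/α ≤ C₂ := by
      have h1 : (0:ℝ) ≤ 2*C₁/c := by positivity
      rw [hC₂def]; linarith
    have hC₂2 : 2*C₁/c ≤ C₂ := by
      have h1 : (0:ℝ) ≤ 4*(c+1)/α := by positivity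
      rw [hC₂def]; linarith
    have hA : 4*(c+1) ≤ α*C₂ := by rw [div_le_iff₀ hα] at hC₂1; linarith
    have hA' : 4 ≤ α*C₂ := by nlinarith
    have hB2 : 2*C₁ ≤ c*C₂ := by rw [div_le_iff₀ hc] at hC₂2; linarith
    have hkey2 : Real.exp (-(α*t)/4) * E ≤ Real.exp (-(x+t)/C₂) := by
      rw [hEdef]; split
      · rename_i h
        rw [mul_one]
        apply Real.exp_le_exp.mpr
        rw [neg_div, neg_div, neg_le_neg_iff, div_le_div_iff₀ hC₂pos (by norm_num : (0:ℝ) < 4)]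
        nlinarith [mul_le_mul_of_nonneg_right hA ht.le]
      · rename_i h
        push_neg at h
        rw [← Real.exp_add]
        apply Real.exp_le_exp.mpr
        have e1 : t/C₂ ≤ α*t/4 := by
          rw [div_le_div_iff₀ hC₂pos (by norm_num : (0:ℝ) < 4)]
          nlinarith [mul_le_mul_of_nonneg_right hA' ht.le]
        have e2 : x/C₂ ≤ c*x/(2*C₁) := by
          rw [div_le_div_iff₀ hC₂pos (by positivity : (0:ℝ) < 2*C₁)]
          nlinarith [mul_le_mul_of_nonneg_right hB2 hx.le]
        have e3 : (x+t)/C₂ = x/C₂ + t/C₂ := add_div _ _ _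
        rw [neg_div, neg_div, neg_div]
        linarith
    have hsplit : Real.exp (-(α*t)/2) = Real.exp (-(α*t)/4) * Real.exp (-(α*t)/4) := by
      rw [← Real.exp_add]; congr 1; ring
    have hfinal : B * (2 * Real.sqrt (t/2)) ≤ C₂ * Real.exp (-(x+t)/C₂) := by
      have heq : B * (2 * Real.sqrt (t/2))
          = (2*C*C₁) * (Real.sqrt (t/2) * Real.exp (-(α*t)/4))
              * (Real.exp (-(α*t)/4) * E) := by
        rw [hBdef, hsplit]; ring
      rw [heq]
      have step1 : (2*C*C₁) * (Real.sqrt (t/2) * Real.exp (-(α*t)/4))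
          * (Real.exp (-(α*t)/4) * E) ≤ (2*C*C₁) * K₁ * Real.exp (-(x+t)/C₂) := by
        apply mul_le_mul _ hkey2 (by positivity) (by positivity)
        exact mul_le_mul_of_nonneg_left hkey1' (by positivity)
      refine step1.trans ?_
      apply mul_le_mul_of_nonneg_right _ (Real.exp_pos _).le
      have h1 : (0:ℝ) ≤ 4*(c+1)/α := by positivity
      have h2 : (0:ℝ) ≤ 2*C₁/c := by positivity
      rw [hC₂def]; linarith
    have hmain : (∫ s in (0:ℝ)..(t/2), |ω (t - s) * G x s|) ≤ C₂ * Real.exp (-(x+t)/C₂) := by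
      calc (∫ s in (0:ℝ)..(t/2), |ω (t - s) * G x s|)
          ≤ ∫ s in (0:ℝ)..(t/2), B * s^(-(1:ℝ)/2) := hmono
        _ = B * (2 * Real.sqrt (t/2)) := hval
        _ ≤ C₂ * Real.exp (-(x+t)/C₂) := hfinal
    linarith
  · rw [intervalIntegral.integral_undef hInt]
    positivity
end

section
/- Let ω₂ : [0,∞) → ℝ satisfy |ω₂(t)| ≤ Ce^{-αt} with C, α > 0, and let H : ℝ × (0,∞) → ℝ satisfy |H(x,s)| ≤ C₁ (s+1)^{-3/2} e^{-(x-cs)²/(C₁ s)} for x ∈ ℝ, s > 0, where C₁ ≥ 2c²/α. Then there exists C₂ > 0 such that for all x ∈ ℝ, t > 1: ∫_{t/2}^{t} |ω₂(t-s) H(x,s)| ds ≤ C₂ (t+1)^{-3/2} e^{-(x-ct)²/(C₁ t)}. -/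
open MeasureTheory Real Set

/-!
On `[t/2, t]` the weight `(s + 1)^(-3/2)` is comparable to `(t + 1)^(-3/2)`, and half of the
exponential decay of `ω₂ (t - s)` pays for moving the centre of the Gaussian from `c s` to `c t`;
this is where `C₁ ≥ 2 c² / α` enters. The other half, `e^{-(α/2)(t-s)}`, has integral at most `2/α`.
-/

theorem exp_neg_mul_mul_exp_gaussian_le {α c C₁ : ℝ} (hC₁ : 0 < C₁) (hcα : 2 * c ^ 2 ≤ α * C₁)
    (x : ℝ) {s t : ℝ} (hs : 0 < s) (hst : s ≤ t) :
    exp (-(α / 2) * (t - s)) * exp (-(x - c * s) ^ 2 / (C₁ * s)) ≤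
      exp (-(x - c * t) ^ 2 / (C₁ * t)) := by
  have ht : 0 < t := hs.trans_le hst
  rw [← exp_add, exp_le_exp, ← sub_nonneg]
  have hnum : 0 ≤ (t - s) * (x ^ 2 + (α * C₁ - 2 * c ^ 2) / 2 * s * t) := by
    have := sub_nonneg.2 hcα
    have := sub_nonneg.2 hst
    positivity
  have hdiff : -(x - c * t) ^ 2 / (C₁ * t) - (-(α / 2) * (t - s) + -(x - c * s) ^ 2 / (C₁ * s)) =
      (t - s) * (x ^ 2 + (α * C₁ - 2 * c ^ 2) / 2 * s * t) / (C₁ * s * t) := by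
    field_simp
    ring
  rw [hdiff]
  positivity

theorem add_one_rpow_le_of_half_le {q : ℝ} (hq : q ≤ 0) {s t : ℝ} (ht : -1 < t) (hts : t / 2 ≤ s) :
    (s + 1) ^ q ≤ 2 ^ (-q) * (t + 1) ^ q := calc
  (s + 1) ^ q ≤ ((t + 1) / 2) ^ q := rpow_le_rpow_of_nonpos (by linarith) (by linarith) hq
  _ = 2 ^ (-q) * (t + 1) ^ q := by
    rw [div_rpow (by linarith) zero_le_two, rpow_neg zero_le_two, div_eq_inv_mul]

theorem integral_exp_neg_mul_sub_le {β : ℝ} (hβ : 0 < β) (a t : ℝ) :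
    ∫ s in a..t, exp (-β * (t - s)) ≤ 1 / β := by
  have h := intervalIntegral.integral_comp_mul_sub (fun u => exp u) hβ.ne' (β * t) (a := a) (b := t)
  simp only [integral_exp, sub_self, exp_zero, smul_eq_mul] at h
  calc ∫ s in a..t, exp (-β * (t - s)) = β⁻¹ * (1 - exp (β * a - β * t)) := by
        rw [← h]; congr 1; ext s; ring_nf
    _ ≤ 1 / β := by
        rw [one_div]
        exact mul_le_of_le_one_right (inv_nonneg.2 hβ.le) (sub_le_self _ (exp_pos _).le)

theorem intervalIntegral.integral_mono_on_of_nonneg {f g : ℝ → ℝ} {a b : ℝ} (hab : a ≤ b)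
    (hf : ∀ x ∈ Icc a b, 0 ≤ f x) (hg : IntervalIntegrable g volume a b)
    (hfg : ∀ x ∈ Icc a b, f x ≤ g x) :
    ∫ x in a..b, f x ≤ ∫ x in a..b, g x := by
  by_cases hfi : IntervalIntegrable f volume a b
  · exact intervalIntegral.integral_mono_on hab hfi hg hfg
  · rw [intervalIntegral.integral_undef hfi]
    exact intervalIntegral.integral_nonneg hab fun x hx => (hf x hx).trans (hfg x hx)

section

variable {ω₂ : ℝ → ℝ} {H : ℝ → ℝ → ℝ} {C α c C₁ : ℝ}

theorem abs_mul_le_decay_of_mem_Icc (hC₁ : 0 < C₁) (hcα : 2 * c ^ 2 ≤ α * C₁)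
    (hω : ∀ t : ℝ, 0 ≤ t → |ω₂ t| ≤ C * exp (-α * t))
    (hH : ∀ x s : ℝ, 0 < s →
      |H x s| ≤ C₁ * (s + 1) ^ (-(3:ℝ)/2) * exp (-(x - c*s) ^ 2 / (C₁ * s)))
    (x : ℝ) {s t : ℝ} (ht : 0 < t) (hs : s ∈ Icc (t / 2) t) :
    |ω₂ (t - s) * H x s| ≤
      C * C₁ * 2 ^ ((3:ℝ)/2) * (t + 1) ^ (-(3:ℝ)/2) * exp (-(x - c*t) ^ 2 / (C₁ * t)) *
        exp (-(α / 2) * (t - s)) := by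
  obtain ⟨hts, hst⟩ := hs
  have hs : 0 < s := by linarith
  have hC : 0 ≤ C := (abs_nonneg _).trans ((hω 0 le_rfl).trans_eq (by simp))
  have hpow : (s + 1) ^ (-(3:ℝ)/2) ≤ 2 ^ ((3:ℝ)/2) * (t + 1) ^ (-(3:ℝ)/2) := by
    simpa [neg_div] using add_one_rpow_le_of_half_le (q := -(3:ℝ)/2) (by norm_num) (by linarith) hts
  have hexp := exp_neg_mul_mul_exp_gaussian_le hC₁ hcα x hs hst
  have hsplit : exp (-α * (t - s)) = exp (-(α / 2) * (t - s)) * exp (-(α / 2) * (t - s)) := by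
    rw [← exp_add]; ring_nf
  calc |ω₂ (t - s) * H x s| = |ω₂ (t - s)| * |H x s| := abs_mul _ _
    _ ≤ C * exp (-α * (t - s)) *
        (C₁ * (2 ^ ((3:ℝ)/2) * (t + 1) ^ (-(3:ℝ)/2)) * exp (-(x - c*s) ^ 2 / (C₁ * s))) := by
      gcongr
      · exact hω _ (by linarith)
      · exact (hH x s hs).trans (by gcongr)
    _ = C * C₁ * 2 ^ ((3:ℝ)/2) * (t + 1) ^ (-(3:ℝ)/2) *
        (exp (-(α / 2) * (t - s)) * exp (-(x - c*s) ^ 2 / (C₁ * s))) *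
        exp (-(α / 2) * (t - s)) := by rw [hsplit]; ring
    _ ≤ _ := by gcongr

end

theorem stmt13_general (ω₂ : ℝ → ℝ) (H : ℝ → ℝ → ℝ) (C α c C₁ : ℝ)
    (hC : 0 < C) (hα : 0 < α)
    (hC₁ : C₁ ≥ 2 * c^2 / α) (hC₁pos : 0 < C₁)
    (hω : ∀ t : ℝ, 0 ≤ t → |ω₂ t| ≤ C * Real.exp (-α * t))
    (hH : ∀ x s : ℝ, 0 < s →
      |H x s| ≤ C₁ * (s + 1)^(-(3:ℝ)/2) * Real.exp (-(x - c*s)^2 / (C₁ * s))) :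
    ∃ C₂ : ℝ, 0 < C₂ ∧ ∀ x t : ℝ, 1 < t →
      (∫ s in (t/2)..t, |ω₂ (t - s) * H x s|) ≤
        C₂ * (t + 1)^(-(3:ℝ)/2) * Real.exp (-(x - c*t)^2 / (C₁ * t)) := by
  have hcα : 2 * c ^ 2 ≤ α * C₁ := by
    rw [ge_iff_le, div_le_iff₀ hα] at hC₁; linarith
  refine ⟨C * C₁ * 2 ^ ((3:ℝ)/2) * (1 / (α / 2)), by positivity, fun x t ht => ?_⟩
  set K := C * C₁ * 2 ^ ((3:ℝ)/2) * (t + 1) ^ (-(3:ℝ)/2) * exp (-(x - c*t) ^ 2 / (C₁ * t))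
  calc ∫ s in (t/2)..t, |ω₂ (t - s) * H x s|
      ≤ ∫ s in (t/2)..t, K * exp (-(α / 2) * (t - s)) :=
        intervalIntegral.integral_mono_on_of_nonneg (by linarith) (fun _ _ => abs_nonneg _)
          ((by fun_prop : Continuous _).intervalIntegrable _ _)
          fun s hs => abs_mul_le_decay_of_mem_Icc hC₁pos hcα hω hH x (by linarith) hs
    _ = K * ∫ s in (t/2)..t, exp (-(α / 2) * (t - s)) := intervalIntegral.integral_const_mul _ _
    _ ≤ K * (1 / (α / 2)) := by
        gcongr
        exact integral_exp_neg_mul_sub_le (by positivity) _ _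
    _ = _ := by ring

theorem stmt13 (ω₂ : ℝ → ℝ) (H : ℝ → ℝ → ℝ) (C α c C₁ : ℝ)
    (hC : 0 < C) (hα : 0 < α) (hc : 0 < c)
    (hC₁ : C₁ ≥ 2 * c^2 / α) (hC₁pos : 0 < C₁)
    (hω : ∀ t : ℝ, 0 ≤ t → |ω₂ t| ≤ C * Real.exp (-α * t))
    (hH : ∀ x s : ℝ, 0 < s →
      |H x s| ≤ C₁ * (s + 1)^(-(3:ℝ)/2) * Real.exp (-(x - c*s)^2 / (C₁ * s))) :
    ∃ C₂ : ℝ, 0 < C₂ ∧ ∀ x t : ℝ, 1 < t →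
      (∫ s in (t/2)..t, |ω₂ (t - s) * H x s|) ≤
        C₂ * (t + 1)^(-(3:ℝ)/2) * Real.exp (-(x - c*t)^2 / (C₁ * t)) :=
  stmt13_general ω₂ H C α c C₁ hC hα hC₁ hC₁pos hω hH
end
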